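/- arXiv:2604.26870 — 6 statements merged into one kernel-verified Lean document; each statement's English description precedes it below -/
import Mathlib

section
/- Let (M,U) be a Lax pair and let G ∈ GL(d,R) be any invertible d×d matrix over R. Then the pair (M̂, Û) with M̂ = S(G)·M·G⁻¹ and Û = D(G)·G⁻¹ + G·U·G⁻¹ is again a Lax pair, i.e. D(M̂) = S(Û)·M̂ − M̂·Û. -/
/-- Fix a positive integer `d`. Let `R` be a commutative ring, `S` a ring automorphism of `R`,
and `D : R → R` a derivation with `D ∘ S = S ∘ D`; `S` and `D` act entrywise on `d×d`
matrices. A Lax pair is a pair `(M, U)` of `d×d` matrices with `M` invertible such that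
`D(M) = S(U)·M − M·U`. Claim: for any invertible `G`, the pair
`(M̂, Û) = (S(G)·M·G⁻¹, D(G)·G⁻¹ + G·U·G⁻¹)` is again a Lax pair. -/
theorem stmt_0 {d : ℕ} (hd : 0 < d) {R : Type*} [CommRing R]
    (S : R ≃+* R) (D : R → R)
    (hDadd : ∀ x y, D (x + y) = D x + D y)
    (hDmul : ∀ x y, D (x * y) = x * D y + D x * y)
    (hDS : ∀ x, D (S x) = S (D x))
    (M U G : Matrix (Fin d) (Fin d) R)
    (hM : IsUnit M.det) (hG : IsUnit G.det)
    (hLax : M.map D = U.map ⇑S * M - M * U) :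
    IsUnit ((G.map ⇑S) * M * G⁻¹).det ∧
    ((G.map ⇑S) * M * G⁻¹).map D =
      ((G.map D * G⁻¹ + G * U * G⁻¹).map ⇑S) * ((G.map ⇑S) * M * G⁻¹) -
        ((G.map ⇑S) * M * G⁻¹) * (G.map D * G⁻¹ + G * U * G⁻¹) := by
  -- basic facts about D
  have hD0 : D 0 = 0 := by
    have := hDadd 0 0; simpa using this
  have hD1 : D 1 = 0 := by
    have := hDmul 1 1; simpa using this
  let D' : R →+ R := AddMonoidHom.mk' D hDadd
  have hD'eq : ∀ x, D' x = D x := fun _ => rfl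
  -- Leibniz rule for matrix products
  have mapD_mul : ∀ A B : Matrix (Fin d) (Fin d) R,
      (A * B).map D = A * B.map D + A.map D * B := by
    intro A B
    ext i j
    simp only [Matrix.map_apply, Matrix.mul_apply, Matrix.add_apply]
    rw [← hD'eq, map_sum]
    rw [← Finset.sum_add_distrib]
    refine Finset.sum_congr rfl fun k _ => ?_
    simp [hD'eq, hDmul]
  -- S as ring hom on matrices
  have mapS_mul : ∀ A B : Matrix (Fin d) (Fin d) R,
      (A * B).map ⇑S = A.map ⇑S * B.map ⇑S := fun A B =>
    Matrix.map_mul (f := S.toRingHom)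
  have mapS_add : ∀ A B : Matrix (Fin d) (Fin d) R,
      (A + B).map ⇑S = A.map ⇑S + B.map ⇑S := fun A B => by
    ext i j; simp [Matrix.map_apply]
  have mapS_one : (1 : Matrix (Fin d) (Fin d) R).map ⇑S = 1 :=
    Matrix.map_one _ (map_zero S) (map_one S)
  -- set H := G⁻¹
  set H := G⁻¹ with hH
  have hGH : G * H = 1 := Matrix.mul_nonsing_inv G hG
  have hHG : H * G = 1 := Matrix.nonsing_inv_mul G hG
  -- invertibility of the new M
  constructor
  · rw [Matrix.det_mul, Matrix.det_mul]
    have h1 : (G.map ⇑S).det = S G.det := (RingHom.map_det S.toRingHom G).symm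
    exact ((h1 ▸ hG.map S).mul hM).mul (Matrix.isUnit_nonsing_inv_det G hG)
  -- main identity
  set A := G.map ⇑S with hA
  set B := H.map ⇑S with hB
  have hAB : A * B = 1 := by rw [hA, hB, ← mapS_mul, hGH, mapS_one]
  have hBA : B * A = 1 := by rw [hA, hB, ← mapS_mul, hHG, mapS_one]
  set X := G.map D with hX
  set Y := X.map ⇑S with hY
  -- D and S maps commute
  have hAD : A.map D = Y := by
    ext i j; simp [hA, hX, hY, Matrix.map_apply, hDS]
  -- derivative of H
  have hHD : H.map D = -(H * X * H) := by
    have h0 : (G * H).map D = 0 := by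
      rw [hGH]; ext i j
      simp [Matrix.map_apply, Matrix.one_apply, hD0, hD1]
      split <;> simp [hD0, hD1]
    have := mapD_mul G H
    rw [h0] at this
    have h1 : G * H.map D = -(X * H) := by
      have := eq_neg_of_add_eq_zero_left this.symm
      rw [this, hX]
    calc H.map D = (H * G) * H.map D := by rw [hHG, Matrix.one_mul]
    _ = H * (G * H.map D) := by rw [Matrix.mul_assoc]
    _ = H * -(X * H) := by rw [h1]
    _ = -(H * X * H) := by rw [Matrix.mul_neg, Matrix.mul_assoc]
  -- useful cancellations
  have cBA : ∀ Z : Matrix (Fin d) (Fin d) R, Z * B * A = Z := fun Z => by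
    rw [Matrix.mul_assoc, hBA, Matrix.mul_one]
  have cHG : ∀ Z : Matrix (Fin d) (Fin d) R, Z * H * G = Z := fun Z => by
    rw [Matrix.mul_assoc, hHG, Matrix.mul_one]
  -- expand LHS
  have lhs : (A * M * H).map D =
      Y * M * H + A * (U.map ⇑S) * M * H - A * M * U * H - A * M * H * X * H := by
    rw [mapD_mul, mapD_mul, hHD, hAD, hLax]
    simp only [Matrix.mul_sub, Matrix.sub_mul, Matrix.add_mul, Matrix.mul_neg,
      Matrix.mul_assoc]
    abel
  -- expand RHS
  have rhsS : (X * H + G * U * H).map ⇑S = Y * B + A * U.map ⇑S * B := by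
    rw [mapS_add, mapS_mul, mapS_mul, mapS_mul]
  rw [lhs, rhsS]
  simp only [Matrix.add_mul, Matrix.mul_add, ← Matrix.mul_assoc]
  rw [cBA Y, cBA (A * U.map ⇑S), cHG (A * M)]
  abel
end

section
/- Let (M,U) be an MLR for 𝔽. If ∂_{j,ℓ}(M) = 0 for all j ∈ {1,…,N} and all ℓ ∈ ℤ, then also ∂_{j,ℓ}(U) = 0 for all j ∈ {1,…,N} and all ℓ ∈ ℤ. -/
open MvPolynomial

/-- Variables: `none` is the variable `n`; `some (j, ℓ)` is the variable `u^j_ℓ`. -/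
abbrev Var (N : ℕ) := Option (Fin N × ℤ)

/-- The polynomial ring over `K` in the variables `n` and `u^j_ℓ`. -/
abbrev PolyF (K : Type) [Field K] (N : ℕ) := MvPolynomial (Var N) K

/-- The field `F` of rational functions over `K` in the variables `n` and `u^j_ℓ`. -/
abbrev FF (K : Type) [Field K] (N : ℕ) := FractionRing (PolyF K N)

/-- The image in `F` of the variable `v`. -/
noncomputable def gen (K : Type) [Field K] (N : ℕ) (v : Var N) : FF K N :=
  algebraMap (PolyF K N) (FF K N) (X v)

/-- `f ∈ F` depends only on `n` and the variables `u^j_ℓ` with `α ≤ ℓ ≤ β`: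
`f` lies in the subfield generated by `K`, `n` and these variables. -/
def DependsOnly (K : Type) [Field K] (N : ℕ) (α β : ℤ) (f : FF K N) : Prop :=
  f ∈ Subfield.closure (Set.range (algebraMap K (FF K N)) ∪ {gen K N none} ∪
    { x | ∃ (j : Fin N) (ℓ : ℤ), α ≤ ℓ ∧ ℓ ≤ β ∧ x = gen K N (some (j, ℓ)) })

/-- The total derivative `D_t(f) = Σ_{ℓ,ξ} S^ℓ(𝔽^ξ)·∂_{ξ,ℓ}(f)` associated with the
right-hand side `𝔽 : Fin N → F` (the sum over `ℓ ∈ ℤ` is finite, taken as `finsum`). -/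
noncomputable def Dt (K : Type) [Field K] (N : ℕ) (S : FF K N ≃+* FF K N)
    (P : Fin N → ℤ → FF K N → FF K N) (Fv : Fin N → FF K N) (f : FF K N) : FF K N :=
  ∑ᶠ ℓ : ℤ, ∑ ξ : Fin N, (S ^ ℓ) (Fv ξ) * P ξ ℓ f

/-!
Since every `∂_{j,ℓ}` kills `M`, `D_t(M) = 0` and the Lax equation reads `S(U)·M = M·U`.
Applying `∂_{j,ℓ}` and using `∂_{j,ℓ} ∘ S = S ∘ ∂_{j,ℓ-1}` gives `S(∂_{j,ℓ-1}U)·M = M·∂_{j,ℓ}U`,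
so, `M` being invertible, `∂_{j,ℓ}U = 0` forces `∂_{j,ℓ-1}U = 0`. The entries of `U` involve
only finitely many variables, hence `∂_{j,ℓ}U = 0` for large `ℓ`, and downward induction on `ℓ`
concludes. Both the commutation rule and the finiteness come from the fact that a derivation of
`F` is determined by its values on the generators `n`, `u^j_ℓ`, its kernel being a subfield.
-/

open Filter

namespace Derivation

variable {K L : Type*} [Field K] [Field L] [Algebra K L]

def ofLeibniz (D : L → L) (hadd : ∀ x y, D (x + y) = D x + D y)
    (hmul : ∀ x y, D (x * y) = x * D y + D x * y) (hK : ∀ c : K, D (algebraMap K L c) = 0) :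
    Derivation K L L :=
  mk' { toFun := D
        map_add' := hadd
        map_smul' := fun c x => by simp [Algebra.smul_def, hmul, hK] }
    fun x y => by simp [hmul, mul_comm]

@[simp]
lemma coe_ofLeibniz (D : L → L) (hadd : ∀ x y, D (x + y) = D x + D y)
    (hmul : ∀ x y, D (x * y) = x * D y + D x * y) (hK : ∀ c : K, D (algebraMap K L c) = 0) :
    ⇑(ofLeibniz D hadd hmul hK) = D := rfl

def constants (D : Derivation K L L) : IntermediateField K L where
  carrier := {x | D x = 0}
  mul_mem' {x y} hx hy := by simp_all [leibniz]
  add_mem' {x y} hx hy := by simp_all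
  algebraMap_mem' := D.map_algebraMap
  inv_mem' x hx := by simp_all [leibniz_inv]

lemma eq_zero_of_mem_adjoin (D : Derivation K L L) {s : Set L} (hs : ∀ x ∈ s, D x = 0) {x : L}
    (hx : x ∈ IntermediateField.adjoin K s) : D x = 0 :=
  (IntermediateField.adjoin_le_iff (T := D.constants)).mpr hs hx

lemma ext_of_intermediateField_adjoin_eq_top {s : Set L} (hs : IntermediateField.adjoin K s = ⊤)
    {D₁ D₂ : Derivation K L L} (h : Set.EqOn D₁ D₂ s) : D₁ = D₂ := by
  ext x
  rw [← sub_eq_zero, ← sub_apply]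
  exact eq_zero_of_mem_adjoin (D₁ - D₂) (fun y hy => by simp [h hy])
    (hs ▸ IntermediateField.mem_top (x := x))

def conj (e : L ≃ₐ[K] L) (D : Derivation K L L) : Derivation K L L :=
  mk' (e.symm.toLinearMap ∘ₗ D.toLinearMap ∘ₗ e.toLinearMap) fun a b => by simp [leibniz]

@[simp]
lemma conj_apply (e : L ≃ₐ[K] L) (D : Derivation K L L) (x : L) :
    conj e D x = e.symm (D (e x)) := rfl

lemma map_matrix_mul {m n p : Type*} [Fintype n] (D : Derivation K L L) (A : Matrix m n L)
    (B : Matrix n p L) : (A * B).map D = A * B.map D + A.map D * B := by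
  ext i k
  simp [Matrix.mul_apply, leibniz, Finset.sum_add_distrib, mul_comm]

theorem map_intertwining {m : Type*} [Fintype m] (D D' : Derivation K L L) (σ : L ≃+* L)
    (hσ : ∀ x, D (σ x) = σ (D' x)) {M U : Matrix m m L} (hM : M.map D = 0)
    (h : U.map σ * M = M * U) : (U.map D').map σ * M = M * U.map D := by
  have h' := congr_arg (Matrix.map · D) h
  simp only [map_matrix_mul, hM, Matrix.mul_zero, Matrix.zero_mul, add_zero, zero_add] at h'
  convert h' using 2
  ext
  simp [hσ]

end Derivation

theorem Matrix.eq_zero_of_map_mul_eq_mul_shift {n R : Type*} [Fintype n] [DecidableEq n]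
    [CommRing R] (σ : R ≃+* R) {M : Matrix n n R}
    (hM : IsUnit M.det) {A : ℤ → Matrix n n R} (hA : ∀ ℓ, (A (ℓ - 1)).map σ * M = M * A ℓ)
    (hlarge : ∀ᶠ ℓ in atTop, A ℓ = 0) (ℓ : ℤ) : A ℓ = 0 := by
  have hdown : ∀ ℓ, A ℓ = 0 → A (ℓ - 1) = 0 := by
    intro ℓ hℓ
    have hσA : (A (ℓ - 1)).map σ = 0 := by
      rw [← mul_nonsing_inv_cancel_right M ((A (ℓ - 1)).map σ) hM, hA, hℓ, Matrix.mul_zero,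
        Matrix.zero_mul]
    exact map_injective σ.injective (by simpa using hσA)
  obtain ⟨L, hL⟩ := eventually_atTop.mp hlarge
  rcases le_total L ℓ with h | h
  · exact hL ℓ h
  · induction ℓ, h using Int.leInductionDown with
    | base => exact hL L le_rfl
    | pred k _ ih => exact hdown k ih

section RationalFunctions

variable {K : Type} [Field K] {N : ℕ}

lemma adjoin_range_gen : IntermediateField.adjoin K (Set.range (gen K N)) = ⊤ := by
  let φ := IsScalarTower.toAlgHom K (PolyF K N) (FF K N)
  have hpoly (p : PolyF K N) :
      algebraMap (PolyF K N) (FF K N) p ∈ Algebra.adjoin K (Set.range (gen K N)) := by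
    have : φ p ∈ (Algebra.adjoin K (Set.range X)).map φ := by simp [adjoin_range_X]
    rwa [AlgHom.map_adjoin, ← Set.range_comp] at this
  refine eq_top_iff.mpr fun f _ => ?_
  obtain ⟨p, q, -, rfl⟩ := IsFractionRing.div_surjective (A := PolyF K N) f
  exact div_mem (IntermediateField.algebra_adjoin_le_adjoin K _ (hpoly p))
    (IntermediateField.algebra_adjoin_le_adjoin K _ (hpoly q))

def IsCoordinatePartials (D : Fin N → ℤ → Derivation K (FF K N) (FF K N)) : Prop :=
  ∀ j ℓ v, D j ℓ (gen K N v) = if v = some (j, ℓ) then 1 else 0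

variable {D : Fin N → ℤ → Derivation K (FF K N) (FF K N)}

lemma IsCoordinatePartials.eventually_eq_zero (hD : IsCoordinatePartials D) (j : Fin N)
    (f : FF K N) : ∀ᶠ ℓ in atTop, D j ℓ f = 0 := by
  classical
  obtain ⟨T, hT, hfT⟩ := IntermediateField.exists_finset_of_mem_adjoin
    (adjoin_range_gen (K := K) (N := N) ▸ IntermediateField.mem_top (x := f))
  obtain ⟨s, -, rfl⟩ := Finset.subset_set_image_iff.mp (Set.image_univ.symm ▸ hT)
  have hfin : {ℓ : ℤ | some (j, ℓ) ∈ s}.Finite :=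
    s.finite_toSet.preimage fun _ _ _ _ h => by simpa using h
  filter_upwards [atTop_le_cofinite hfin.eventually_cofinite_notMem] with ℓ hℓ
  refine (D j ℓ).eq_zero_of_mem_adjoin (fun x hx => ?_) hfT
  obtain ⟨v, hv, rfl⟩ := by simpa using hx
  rw [hD, if_neg]
  exact fun h => hℓ (h ▸ hv)

lemma IsCoordinatePartials.apply_shift (hD : IsCoordinatePartials D) (S : FF K N ≃ₐ[K] FF K N)
    (hSn : S (gen K N none) = gen K N none + 1)
    (hSu : ∀ j ℓ, S (gen K N (some (j, ℓ))) = gen K N (some (j, ℓ + 1)))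
    (j : Fin N) (ℓ : ℤ) (f : FF K N) : D j ℓ (S f) = S (D j (ℓ - 1) f) := by
  have h : (D j ℓ).conj S = D j (ℓ - 1) := by
    refine Derivation.ext_of_intermediateField_adjoin_eq_top adjoin_range_gen ?_
    rintro _ ⟨_ | ⟨i, m⟩, rfl⟩
    · simp [hSn, hD _ _ none]
    · rw [Derivation.conj_apply, hSu, hD, hD]
      split_ifs <;> simp_all
      omega
  rw [← h, Derivation.conj_apply, S.apply_symm_apply]

end RationalFunctions

lemma Dt_eq_zero {K : Type} [Field K] {N : ℕ} (S : FF K N ≃+* FF K N)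
    (P : Fin N → ℤ → FF K N → FF K N) (Fv : Fin N → FF K N) {f : FF K N}
    (hf : ∀ j ℓ, P j ℓ f = 0) : Dt K N S P Fv f = 0 := by
  simp [Dt, hf]

theorem stmt_1_general {d N : ℕ}
    (K : Type) [Field K]
    (S : FF K N ≃+* FF K N)
    (hSK : ∀ c : K, S (algebraMap K (FF K N) c) = algebraMap K (FF K N) c)
    (hSn : S (gen K N none) = gen K N none + 1)
    (hSu : ∀ (j : Fin N) (ℓ : ℤ), S (gen K N (some (j, ℓ))) = gen K N (some (j, ℓ + 1)))
    (P : Fin N → ℤ → FF K N → FF K N)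
    (hPadd : ∀ j ℓ x y, P j ℓ (x + y) = P j ℓ x + P j ℓ y)
    (hPmul : ∀ j ℓ x y, P j ℓ (x * y) = x * P j ℓ y + P j ℓ x * y)
    (hPK : ∀ (j : Fin N) (ℓ : ℤ) (c : K), P j ℓ (algebraMap K (FF K N) c) = 0)
    (hPn : ∀ (j : Fin N) (ℓ : ℤ), P j ℓ (gen K N none) = 0)
    (hPu : ∀ (j : Fin N) (ℓ : ℤ) (i : Fin N) (m : ℤ),
      P j ℓ (gen K N (some (i, m))) = if i = j ∧ m = ℓ then 1 else 0)
    (Fv : Fin N → FF K N)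
    (M U : Matrix (Fin d) (Fin d) (FF K N)) (hMdet : M.det ≠ 0)
    (hLax : M.map (Dt K N S P Fv) = U.map ⇑S * M - M * U)
    (hMconst : ∀ (j : Fin N) (ℓ : ℤ), M.map (P j ℓ) = 0) :
    ∀ (j : Fin N) (ℓ : ℤ), U.map (P j ℓ) = 0 := by
  let D j ℓ := Derivation.ofLeibniz (P j ℓ) (hPadd j ℓ) (hPmul j ℓ) (hPK j ℓ)
  have hD : IsCoordinatePartials D := by
    rintro j ℓ (_ | ⟨i, m⟩)
    · simp [D, hPn]
    · simp [D, hPu, and_comm]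
  have hSU : U.map S * M = M * U := by
    have hDtM : M.map (Dt K N S P Fv) = 0 := by
      ext i k
      exact Dt_eq_zero S P Fv fun j ℓ => congr_fun₂ (hMconst j ℓ) i k
    rw [hDtM, eq_comm, sub_eq_zero] at hLax
    exact hLax
  intro j
  refine Matrix.eq_zero_of_map_mul_eq_mul_shift S (isUnit_iff_ne_zero.mpr hMdet)
    (fun ℓ => ?_) ?_
  · exact (D j ℓ).map_intertwining (D j (ℓ - 1)) S
      (hD.apply_shift (AlgEquiv.ofRingEquiv hSK) hSn hSu j ℓ) (hMconst j ℓ) hSU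
  · have hU (i k) : ∀ᶠ ℓ in atTop, P j ℓ (U i k) = 0 := hD.eventually_eq_zero j (U i k)
    filter_upwards [eventually_all.2 fun i => eventually_all.2 (hU i)] with ℓ h
    ext i k
    exact h i k

/-- `F` is the field of rational functions over a char-0 field `K` in `n`, `u^j_ℓ`;
`S` is the field automorphism over `K` with `S(n) = n+1`, `S(u^j_ℓ) = u^j_{ℓ+1}`
(`S` is quantified over all automorphisms with these properties; there is exactly one);
`P j ℓ = ∂/∂u^j_ℓ` are the partial derivatives (quantified by their characterizing
properties: `K`-linear derivations with the standard values on the variables).  Given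
`𝔽 = (𝔽¹,…,𝔽^N)` depending only on `n, u_a,…,u_b`, `D_t` is the associated total
derivative, and an MLR for `𝔽` is a pair `(M,U)` with `det M ≠ 0` and
`D_t(M) = S(U)·M − M·U`.  Claim: if `(M,U)` is an MLR for `𝔽` and `∂_{j,ℓ}(M) = 0`
for all `j, ℓ`, then `∂_{j,ℓ}(U) = 0` for all `j, ℓ`. -/
theorem stmt_1 {d N : ℕ} (hd : 0 < d) (hN : 0 < N)
    (K : Type) [Field K] [CharZero K]
    (S : FF K N ≃+* FF K N)
    (hSK : ∀ c : K, S (algebraMap K (FF K N) c) = algebraMap K (FF K N) c)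
    (hSn : S (gen K N none) = gen K N none + 1)
    (hSu : ∀ (j : Fin N) (ℓ : ℤ), S (gen K N (some (j, ℓ))) = gen K N (some (j, ℓ + 1)))
    (P : Fin N → ℤ → FF K N → FF K N)
    (hPadd : ∀ j ℓ x y, P j ℓ (x + y) = P j ℓ x + P j ℓ y)
    (hPmul : ∀ j ℓ x y, P j ℓ (x * y) = x * P j ℓ y + P j ℓ x * y)
    (hPK : ∀ (j : Fin N) (ℓ : ℤ) (c : K), P j ℓ (algebraMap K (FF K N) c) = 0)
    (hPn : ∀ (j : Fin N) (ℓ : ℤ), P j ℓ (gen K N none) = 0)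
    (hPu : ∀ (j : Fin N) (ℓ : ℤ) (i : Fin N) (m : ℤ),
      P j ℓ (gen K N (some (i, m))) = if i = j ∧ m = ℓ then 1 else 0)
    (a b : ℤ) (hab : a ≤ b)
    (Fv : Fin N → FF K N) (hFv : ∀ ξ, DependsOnly K N a b (Fv ξ))
    (M U : Matrix (Fin d) (Fin d) (FF K N)) (hMdet : M.det ≠ 0)
    (hLax : M.map (Dt K N S P Fv) = U.map ⇑S * M - M * U)
    (hMconst : ∀ (j : Fin N) (ℓ : ℤ), M.map (P j ℓ) = 0) :
    ∀ (j : Fin N) (ℓ : ℤ), U.map (P j ℓ) = 0 :=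
  stmt_1_general K S hSK hSn hSu P hPadd hPmul hPK hPn hPu Fv M U hMdet hLax hMconst
end

section
/- Let (M,U) be a Lax pair such that M has ∂-support in the interval [α,β] (α,β ∈ ℤ, α ≤ β). Then: (i) for the gauge transformation G = M, the matrix S(G)·M·G⁻¹ equals S(M), and the pair (S(M), D(M)·M⁻¹ + M·U·M⁻¹) is a Lax pair whose first member has ∂-support in [α+1, β+1]; (ii) for the gauge transformation Ğ = S⁻¹(M⁻¹), the matrix S(Ğ)·M·Ğ⁻¹ equals S⁻¹(M), and the pair (S⁻¹(M), D(Ğ)·Ğ⁻¹ + Ğ·U·Ğ⁻¹) is a Lax pair whose first member has ∂-support in [α−1, β−1]; (iii) consequently, for every q ∈ ℤ there exists G_q ∈ GL(d,R) such that S(G_q)·M·G_q⁻¹ = S^q(M) and (S^q(M), D(G_q)·G_q⁻¹ + G_q·U·G_q⁻¹) is a Lax pair, whose first member has ∂-support in [α+q, β+q]. -/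
/-!
A gauge transformation `(M, U) ↦ (S(G) M G⁻¹, D(G) G⁻¹ + G U G⁻¹)` by an invertible `G`
preserves the Lax equation, and gauge transformations compose by multiplying the gauge
matrices. The gauges `G = M` and `G = S⁻¹(M⁻¹)` send `M` to `S(M)` and `S⁻¹(M)`; composing
them reaches every `S^q(M)`. Since `S^q ∘ ∂_{j,ℓ} = ∂_{j,ℓ+q} ∘ S^q`, applying `S^q` shifts
the `∂`-support by `q`.
-/

open Matrix

noncomputable section

variable {R : Type*} [CommRing R]

theorem Matrix.map_mul_of_leibniz {l m n : Type*} [Fintype m] {D : R → R}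
    (hDadd : ∀ x y, D (x + y) = D x + D y) (hDmul : ∀ x y, D (x * y) = x * D y + D x * y)
    (A : Matrix l m R) (B : Matrix m n R) :
    (A * B).map D = A * B.map D + A.map D * B := by
  ext i k
  have hsum : ∀ g : m → R, D (∑ j, g j) = ∑ j, D (g j) :=
    fun g => map_sum (AddMonoidHom.mk' D hDadd) g Finset.univ
  simp [mul_apply, hsum, hDmul, Finset.sum_add_distrib]

theorem Matrix.map_one_of_leibniz {n : Type*} [DecidableEq n] {D : R → R}
    (hDadd : ∀ x y, D (x + y) = D x + D y) (hDmul : ∀ x y, D (x * y) = x * D y + D x * y) :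
    (1 : Matrix n n R).map D = 0 := by
  have hD0 : D 0 = 0 := by simpa using hDadd 0 0
  have hD1 : D 1 = 0 := by simpa using hDmul 1 1
  ext i k
  by_cases h : i = k <;> simp [h, hD0, hD1]

theorem Matrix.map_zpow_add_one {m n : Type*} (S : R ≃+* R) (M : Matrix m n R) (q : ℤ) :
    M.map ⇑(S ^ (q + 1)) = (M.map ⇑(S ^ q)).map S := by
  rw [Matrix.map_map, add_comm, _root_.zpow_one_add S q]
  rfl

theorem Matrix.map_zpow_sub_one {m n : Type*} (S : R ≃+* R) (M : Matrix m n R) (q : ℤ) :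
    M.map ⇑(S ^ (q - 1)) = (M.map ⇑(S ^ q)).map S.symm := by
  rw [Matrix.map_map, sub_eq_neg_add, _root_.zpow_add S (-1) q, _root_.zpow_neg_one]
  rfl

def HasSupportIn {ι m n : Type*} (P : ι → ℤ → R → R) (A : Set ℤ) (Q : Matrix m n R) : Prop :=
  ∀ j ℓ, ℓ ∉ A → Q.map (P j ℓ) = 0

theorem zpow_apply_comm {ι : Type*} (S : R ≃+* R) {P : ι → ℤ → R → R}
    (hPS : ∀ j ℓ x, S (P j ℓ x) = P j (ℓ + 1) (S x)) (q : ℤ) (j : ι) (ℓ : ℤ) (x : R) :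
    (S ^ q) (P j ℓ x) = P j (ℓ + q) ((S ^ q) x) := by
  have hPS_symm : ∀ j ℓ y, S.symm (P j (ℓ + 1) y) = P j ℓ (S.symm y) := fun j ℓ y => by
    rw [RingEquiv.symm_apply_eq, hPS, S.apply_symm_apply]
  induction q using Int.induction_on generalizing ℓ x with
  | zero => simp
  | succ q ih =>
    rw [add_comm (q : ℤ) 1, _root_.zpow_one_add, RingAut.mul_apply, RingAut.mul_apply, ih, hPS]
    congr 1
    ring
  | pred q ih =>
    rw [sub_eq_neg_add, _root_.zpow_add S (-1), _root_.zpow_neg_one, RingAut.mul_apply,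
      RingAut.mul_apply, ih, RingAut.inv_apply, RingAut.inv_apply, ← hPS_symm]
    congr 2
    ring

theorem HasSupportIn.map_zpow {ι m n : Type*} (S : R ≃+* R) {P : ι → ℤ → R → R}
    (hPS : ∀ j ℓ x, S (P j ℓ x) = P j (ℓ + 1) (S x)) {A : Set ℤ} {M : Matrix m n R}
    (hM : HasSupportIn P A M) (q : ℤ) : HasSupportIn P ((· - q) ⁻¹' A) (M.map ⇑(S ^ q)) := by
  intro j ℓ hℓ
  have h : (M.map ⇑(S ^ q)).map (P j ℓ) = (M.map (P j (ℓ - q))).map ⇑(S ^ q) := by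
    ext
    simp [zpow_apply_comm S hPS]
  rw [h, hM j _ hℓ, Matrix.map_zero _ (map_zero _)]

variable {n : Type*} [Fintype n] [DecidableEq n]

theorem Matrix.map_inv_of_leibniz {D : R → R}
    (hDadd : ∀ x y, D (x + y) = D x + D y) (hDmul : ∀ x y, D (x * y) = x * D y + D x * y)
    {G : Matrix n n R} (hG : IsUnit G.det) :
    G⁻¹.map D = -(G⁻¹ * G.map D * G⁻¹) := by
  have h : G * G⁻¹.map D + G.map D * G⁻¹ = 0 := by
    rw [← map_mul_of_leibniz hDadd hDmul, mul_nonsing_inv G hG, map_one_of_leibniz hDadd hDmul]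
  calc G⁻¹.map D = G⁻¹ * (G * G⁻¹.map D) := (nonsing_inv_mul_cancel_left _ _ hG).symm
    _ = -(G⁻¹ * G.map D * G⁻¹) := by
      rw [eq_neg_of_add_eq_zero_left h, Matrix.mul_neg, Matrix.mul_assoc]

theorem Matrix.isUnit_det_map {S F : Type*} [CommRing S] [FunLike F R S] [RingHomClass F R S]
    (f : F) {M : Matrix n n R} (hM : IsUnit M.det) : IsUnit (M.map f).det := by
  rw [← RingHom.coe_coe f, ← RingHom.mapMatrix_apply, ← RingHom.map_det]
  exact hM.map f

theorem Matrix.map_nonsing_inv {S F : Type*} [CommRing S] [FunLike F R S] [RingHomClass F R S]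
    (f : F) {M : Matrix n n R} (hM : IsUnit M.det) : M⁻¹.map f = (M.map f)⁻¹ := by
  refine (inv_eq_left_inv ?_).symm
  rw [← Matrix.map_mul, nonsing_inv_mul M hM, Matrix.map_one _ (map_zero f) (map_one f)]

variable (S : R ≃+* R)

/-- The gauge transformation by `G` sends the Lax pair `(M, U)` to
`(gaugeM S G M, gaugeU D G U)`. -/
def gaugeM (G M : Matrix n n R) : Matrix n n R := G.map S * M * G⁻¹

def gaugeU (D : R → R) (G U : Matrix n n R) : Matrix n n R := G.map D * G⁻¹ + G * U * G⁻¹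

theorem lax_gaugeM {D : R → R}
    (hDadd : ∀ x y, D (x + y) = D x + D y) (hDmul : ∀ x y, D (x * y) = x * D y + D x * y)
    (hDS : ∀ x, D (S x) = S (D x)) {M U G : Matrix n n R} (hG : IsUnit G.det)
    (hLax : M.map D = U.map S * M - M * U) :
    (gaugeM S G M).map D =
      (gaugeU D G U).map S * gaugeM S G M - gaugeM S G M * gaugeU D G U := by
  have hDS' : (G.map S).map D = (G.map D).map S := by ext; simp [hDS]
  simp only [gaugeM, gaugeU, map_mul_of_leibniz hDadd hDmul, map_inv_of_leibniz hDadd hDmul hG,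
    hDS', hLax, Matrix.map_add _ (map_add S), Matrix.map_mul, map_nonsing_inv S hG]
  simp only [mul_add, add_mul, mul_sub, sub_mul, mul_neg, Matrix.mul_assoc,
    nonsing_inv_mul_cancel_left _ _ hG, nonsing_inv_mul_cancel_left _ _ (isUnit_det_map S hG)]
  abel

theorem gaugeM_mul (G H M : Matrix n n R) : gaugeM S (G * H) M = gaugeM S G (gaugeM S H M) := by
  simp only [gaugeM, Matrix.map_mul, Matrix.mul_inv_rev, Matrix.mul_assoc]

theorem gaugeM_self {M : Matrix n n R} (hM : IsUnit M.det) : gaugeM S M M = M.map S := by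
  rw [gaugeM, Matrix.mul_assoc, mul_nonsing_inv M hM, Matrix.mul_one]

theorem gaugeM_symm_inv {M : Matrix n n R} (hM : IsUnit M.det) :
    gaugeM S (M⁻¹.map S.symm) M = M.map S.symm := by
  rw [gaugeM, Matrix.map_map, show ⇑S ∘ ⇑S.symm = id from funext S.apply_symm_apply,
    Matrix.map_id, map_nonsing_inv S.symm hM,
    nonsing_inv_nonsing_inv _ (isUnit_det_map S.symm hM), nonsing_inv_mul M hM, Matrix.one_mul]

theorem exists_gaugeM_eq_map_zpow {M : Matrix n n R} (hM : IsUnit M.det) (q : ℤ) :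
    ∃ G : Matrix n n R, IsUnit G.det ∧ gaugeM S G M = M.map ⇑(S ^ q) := by
  induction q using Int.induction_on with
  | zero => exact ⟨1, by simp, by simp [gaugeM]⟩
  | succ q ih =>
    obtain ⟨G, hG, hGM⟩ := ih
    have hMq := isUnit_det_map (S ^ (q : ℤ)) hM
    refine ⟨M.map ⇑(S ^ (q : ℤ)) * G, ?_, ?_⟩
    · rw [det_mul]; exact hMq.mul hG
    · rw [gaugeM_mul, hGM, gaugeM_self S hMq, map_zpow_add_one S]
  | pred q ih =>
    obtain ⟨G, hG, hGM⟩ := ih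
    have hMq := isUnit_det_map (S ^ (-(q : ℤ))) hM
    refine ⟨(M.map ⇑(S ^ (-(q : ℤ))))⁻¹.map S.symm * G, ?_, ?_⟩
    · rw [det_mul]
      exact (isUnit_det_map S.symm (isUnit_nonsing_inv_det _ hMq)).mul hG
    · rw [gaugeM_mul, hGM, gaugeM_symm_inv S hMq, map_zpow_sub_one S]

end

theorem stmt_2_general {d N : ℕ} {R : Type*} [CommRing R]
    (S : R ≃+* R)
    (P : Fin N → ℤ → R → R)
    (hPS : ∀ j ℓ x, S (P j ℓ x) = P j (ℓ + 1) (S x))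
    (D : R → R)
    (hDadd : ∀ x y, D (x + y) = D x + D y)
    (hDmul : ∀ x y, D (x * y) = x * D y + D x * y)
    (hDS : ∀ x, D (S x) = S (D x))
    (α β : ℤ)
    (M U : Matrix (Fin d) (Fin d) R) (hM : IsUnit M.det)
    (hLax : M.map D = U.map ⇑S * M - M * U)
    (hsupp : ∀ (j : Fin N) (ℓ : ℤ), ℓ ∉ Set.Icc α β → M.map (P j ℓ) = 0) :
    -- (i) gauge transformation G = M
    ((M.map ⇑S) * M * M⁻¹ = M.map ⇑S ∧
      IsUnit (M.map ⇑S).det ∧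
      (M.map ⇑S).map D =
        ((M.map D * M⁻¹ + M * U * M⁻¹).map ⇑S) * (M.map ⇑S) -
          (M.map ⇑S) * (M.map D * M⁻¹ + M * U * M⁻¹) ∧
      ∀ (j : Fin N) (ℓ : ℤ), ℓ ∉ Set.Icc (α + 1) (β + 1) → (M.map ⇑S).map (P j ℓ) = 0) ∧
    -- (ii) gauge transformation Ğ = S⁻¹(M⁻¹)
    (((M⁻¹.map ⇑S.symm).map ⇑S) * M * (M⁻¹.map ⇑S.symm)⁻¹ = M.map ⇑S.symm ∧
      IsUnit (M.map ⇑S.symm).det ∧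
      (M.map ⇑S.symm).map D =
        (((M⁻¹.map ⇑S.symm).map D * (M⁻¹.map ⇑S.symm)⁻¹ +
            (M⁻¹.map ⇑S.symm) * U * (M⁻¹.map ⇑S.symm)⁻¹).map ⇑S) * (M.map ⇑S.symm) -
          (M.map ⇑S.symm) * ((M⁻¹.map ⇑S.symm).map D * (M⁻¹.map ⇑S.symm)⁻¹ +
            (M⁻¹.map ⇑S.symm) * U * (M⁻¹.map ⇑S.symm)⁻¹) ∧
      ∀ (j : Fin N) (ℓ : ℤ), ℓ ∉ Set.Icc (α - 1) (β - 1) → (M.map ⇑S.symm).map (P j ℓ) = 0) ∧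
    -- (iii) arbitrary shifts
    (∀ q : ℤ, ∃ G : Matrix (Fin d) (Fin d) R, IsUnit G.det ∧
      (G.map ⇑S) * M * G⁻¹ = M.map ⇑(S ^ q) ∧
      (M.map ⇑(S ^ q)).map D =
        ((G.map D * G⁻¹ + G * U * G⁻¹).map ⇑S) * (M.map ⇑(S ^ q)) -
          (M.map ⇑(S ^ q)) * (G.map D * G⁻¹ + G * U * G⁻¹) ∧
      IsUnit (M.map ⇑(S ^ q)).det ∧
      ∀ (j : Fin N) (ℓ : ℤ), ℓ ∉ Set.Icc (α + q) (β + q) → (M.map ⇑(S ^ q)).map (P j ℓ) = 0) := by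
  have hsupp_shift (q : ℤ) : HasSupportIn P (Set.Icc (α + q) (β + q)) (M.map ⇑(S ^ q)) := by
    simpa only [Set.preimage_sub_const_Icc] using HasSupportIn.map_zpow S hPS hsupp q
  have hS_neg_one : ⇑(S ^ (-1 : ℤ)) = ⇑S.symm := by rw [_root_.zpow_neg_one]; rfl
  have hM_inv_symm := isUnit_det_map S.symm (isUnit_nonsing_inv_det M hM)
  refine ⟨⟨gaugeM_self S hM, isUnit_det_map S hM,
      gaugeM_self S hM ▸ lax_gaugeM S hDadd hDmul hDS hM hLax, ?_⟩,
    ⟨gaugeM_symm_inv S hM, isUnit_det_map S.symm hM,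
      gaugeM_symm_inv S hM ▸ lax_gaugeM S hDadd hDmul hDS hM_inv_symm hLax, ?_⟩, fun q => ?_⟩
  · simpa only [HasSupportIn, _root_.zpow_one] using hsupp_shift 1
  · simpa only [HasSupportIn, hS_neg_one, ← sub_eq_add_neg] using hsupp_shift (-1)
  obtain ⟨G, hG, hGM⟩ := exists_gaugeM_eq_map_zpow S hM q
  exact ⟨G, hG, hGM, hGM ▸ lax_gaugeM S hDadd hDmul hDS hG hLax, isUnit_det_map _ hM,
    hsupp_shift q⟩

/-- Fix positive integers `d`, `N`. Let `R` be a commutative ring, `S` a ring automorphism,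
`P j ℓ` (for `j ∈ Fin N`, `ℓ ∈ ℤ`) derivations with `S ∘ P j ℓ = P j (ℓ+1) ∘ S`, and
`D` a derivation with `D ∘ S = S ∘ D`; all act entrywise on `d×d` matrices.  A matrix `Q`
has ∂-support in `A ⊆ ℤ` if `P j ℓ Q = 0` for all `j` and all `ℓ ∉ A`.  A Lax pair is a
pair `(M, U)` with `M` invertible and `D(M) = S(U)·M − M·U`.  Claim: if `(M,U)` is a Lax
pair with `M` of ∂-support in `[α,β]`, then (i) the gauge transformation `G = M` yields the
Lax pair `(S(M), D(M)·M⁻¹ + M·U·M⁻¹)` with support shifted to `[α+1,β+1]`; (ii) the gauge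
transformation `Ğ = S⁻¹(M⁻¹)` yields the Lax pair `(S⁻¹(M), D(Ğ)·Ğ⁻¹ + Ğ·U·Ğ⁻¹)` with
support in `[α−1,β−1]`; (iii) for each `q : ℤ` there is an invertible `G_q` with
`S(G_q)·M·G_q⁻¹ = S^q(M)` forming a Lax pair with support in `[α+q, β+q]`. -/
theorem stmt_2 {d N : ℕ} (hd : 0 < d) (hN : 0 < N) {R : Type*} [CommRing R]
    (S : R ≃+* R)
    (P : Fin N → ℤ → R → R)
    (hPadd : ∀ j ℓ x y, P j ℓ (x + y) = P j ℓ x + P j ℓ y)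
    (hPmul : ∀ j ℓ x y, P j ℓ (x * y) = x * P j ℓ y + P j ℓ x * y)
    (hPS : ∀ j ℓ x, S (P j ℓ x) = P j (ℓ + 1) (S x))
    (D : R → R)
    (hDadd : ∀ x y, D (x + y) = D x + D y)
    (hDmul : ∀ x y, D (x * y) = x * D y + D x * y)
    (hDS : ∀ x, D (S x) = S (D x))
    (α β : ℤ) (hαβ : α ≤ β)
    (M U : Matrix (Fin d) (Fin d) R) (hM : IsUnit M.det)
    (hLax : M.map D = U.map ⇑S * M - M * U)
    (hsupp : ∀ (j : Fin N) (ℓ : ℤ), ℓ ∉ Set.Icc α β → M.map (P j ℓ) = 0) :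
    -- (i) gauge transformation G = M
    ((M.map ⇑S) * M * M⁻¹ = M.map ⇑S ∧
      IsUnit (M.map ⇑S).det ∧
      (M.map ⇑S).map D =
        ((M.map D * M⁻¹ + M * U * M⁻¹).map ⇑S) * (M.map ⇑S) -
          (M.map ⇑S) * (M.map D * M⁻¹ + M * U * M⁻¹) ∧
      ∀ (j : Fin N) (ℓ : ℤ), ℓ ∉ Set.Icc (α + 1) (β + 1) → (M.map ⇑S).map (P j ℓ) = 0) ∧
    -- (ii) gauge transformation Ğ = S⁻¹(M⁻¹)
    (((M⁻¹.map ⇑S.symm).map ⇑S) * M * (M⁻¹.map ⇑S.symm)⁻¹ = M.map ⇑S.symm ∧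
      IsUnit (M.map ⇑S.symm).det ∧
      (M.map ⇑S.symm).map D =
        (((M⁻¹.map ⇑S.symm).map D * (M⁻¹.map ⇑S.symm)⁻¹ +
            (M⁻¹.map ⇑S.symm) * U * (M⁻¹.map ⇑S.symm)⁻¹).map ⇑S) * (M.map ⇑S.symm) -
          (M.map ⇑S.symm) * ((M⁻¹.map ⇑S.symm).map D * (M⁻¹.map ⇑S.symm)⁻¹ +
            (M⁻¹.map ⇑S.symm) * U * (M⁻¹.map ⇑S.symm)⁻¹) ∧
      ∀ (j : Fin N) (ℓ : ℤ), ℓ ∉ Set.Icc (α - 1) (β - 1) → (M.map ⇑S.symm).map (P j ℓ) = 0) ∧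
    -- (iii) arbitrary shifts
    (∀ q : ℤ, ∃ G : Matrix (Fin d) (Fin d) R, IsUnit G.det ∧
      (G.map ⇑S) * M * G⁻¹ = M.map ⇑(S ^ q) ∧
      (M.map ⇑(S ^ q)).map D =
        ((G.map D * G⁻¹ + G * U * G⁻¹).map ⇑S) * (M.map ⇑(S ^ q)) -
          (M.map ⇑(S ^ q)) * (G.map D * G⁻¹ + G * U * G⁻¹) ∧
      IsUnit (M.map ⇑(S ^ q)).det ∧
      ∀ (j : Fin N) (ℓ : ℤ), ℓ ∉ Set.Icc (α + q) (β + q) → (M.map ⇑(S ^ q)).map (P j ℓ) = 0) :=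
  stmt_2_general S P hPS D hDadd hDmul hDS α β M U hM hLax hsupp
end

section
/- Let p ≥ 1 be an integer. Let M ∈ GL(d,R) have ∂-support in {0,1,…,p}, and let G ∈ GL(d,R) have finite ∂-support. If the matrix M̂ = S(G)·M·G⁻¹ has ∂-support in {0,1,…,p−1}, then G itself has ∂-support in {0,1,…,p−1}, i.e. ∂_{j,ℓ}(G) = 0 for every j ∈ {1,…,N} and every ℓ ∉ {0,1,…,p−1}. -/
/-!
Differentiating the gauge relation `Mhat G = S(G) M` with `∂_ℓ` and using
`∂_ℓ ∘ S = S ∘ ∂_{ℓ-1}` gives `Mhat ∂_ℓ G = S(∂_{ℓ-1} G) M` whenever `∂_ℓ` kills both `M` and `Mhat`,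
that is for `ℓ < 0` and `ℓ > p`. As `Mhat` and `M` are invertible and `S` is injective, `∂_ℓ G`
vanishes iff `∂_{ℓ-1} G` does. Since `∂_ℓ G = 0` for `|ℓ|` large, this propagates upwards from
`-∞` to all `ℓ < 0` and downwards from `+∞` to all `ℓ ≥ p`.
-/

open Filter

theorem Int.forall_lt_of_eventually_atBot {z : ℤ → Prop} {a : ℤ} (hbot : ∀ᶠ ℓ in atBot, z ℓ)
    (hstep : ∀ ℓ < a, z (ℓ - 1) → z ℓ) : ∀ ℓ < a, z ℓ := by
  obtain ⟨b, hb⟩ := eventually_atBot.1 hbot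
  intro ℓ hℓa
  obtain hℓb | hbℓ := le_total ℓ b
  · exact hb ℓ hℓb
  induction ℓ, hbℓ using Int.leInduction with
  | base => exact hb b le_rfl
  | succ n _ ih => exact hstep (n + 1) hℓa (by simpa using ih (by omega))

theorem Int.forall_ge_of_eventually_atTop {z : ℤ → Prop} {a : ℤ} (htop : ∀ᶠ ℓ in atTop, z ℓ)
    (hstep : ∀ ℓ > a, z ℓ → z (ℓ - 1)) : ∀ ℓ ≥ a, z ℓ := by
  obtain ⟨b, hb⟩ := eventually_atTop.1 htop
  intro ℓ hℓa
  obtain hbℓ | hℓb := le_total b ℓ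
  · exact hb ℓ hbℓ
  induction ℓ, hℓb using Int.leInductionDown with
  | base => exact hb b le_rfl
  | pred n _ ih => exact hstep n (by omega) (ih (by omega))

theorem Matrix.map_mul_of_leibniz_s3 {l m n R : Type*} [Fintype m] [NonUnitalNonAssocRing R]
    {f : R → R} (hadd : ∀ x y, f (x + y) = f x + f y)
    (hmul : ∀ x y, f (x * y) = x * f y + f x * y) (X : Matrix l m R) (Y : Matrix m n R) :
    (X * Y).map f = X * Y.map f + X.map f * Y := by
  ext i k
  simp only [map_apply, mul_apply, add_apply, ← Finset.sum_add_distrib, ← hmul]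
  exact map_sum (AddMonoidHom.mk' f hadd) _ _

theorem Matrix.map_eq_zero_iff_map_pred_eq_zero {n R : Type*} [Fintype n] [DecidableEq n]
    [CommRing R] (S : R ≃+* R) {D : ℤ → R → R}
    (hadd : ∀ ℓ x y, D ℓ (x + y) = D ℓ x + D ℓ y)
    (hmul : ∀ ℓ x y, D ℓ (x * y) = x * D ℓ y + D ℓ x * y)
    (hDS : ∀ ℓ x, S (D ℓ x) = D (ℓ + 1) (S x)) {M G : Matrix n n R} (hM : IsUnit M)
    (hG : IsUnit G) {ℓ : ℤ} (hMℓ : M.map (D ℓ) = 0) (hMhatℓ : (G.map S * M * G⁻¹).map (D ℓ) = 0) :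
    G.map (D ℓ) = 0 ↔ G.map (D (ℓ - 1)) = 0 := by
  set Mhat := G.map S * M * G⁻¹
  have hGS : IsUnit (G.map S) := hG.map S.mapMatrix
  have hMhat : IsUnit Mhat := (hGS.mul hM).mul (isUnit_nonsing_inv_iff.2 hG)
  have hgauge : Mhat * G = G.map S * M := by
    rw [mul_assoc, nonsing_inv_mul G ((isUnit_iff_isUnit_det G).1 hG), mul_one]
  have hDS' : (G.map S).map (D ℓ) = (G.map (D (ℓ - 1))).map S := by
    ext i k
    simpa using (hDS (ℓ - 1) (G i k)).symm
  have hrel : Mhat * G.map (D ℓ) = (G.map (D (ℓ - 1))).map S * M := by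
    simpa [map_mul_of_leibniz_s3 (hadd ℓ) (hmul ℓ), hMℓ, hMhatℓ, hDS'] using
      congrArg (map · (D ℓ)) hgauge
  rw [← hMhat.mul_right_eq_zero, hrel, hM.mul_left_eq_zero, ← RingEquiv.mapMatrix_apply,
    map_eq_zero_iff _ S.mapMatrix.injective]

theorem stmt_3_general {d N : ℕ} {R : Type*} [CommRing R]
    (S : R ≃+* R)
    (P : Fin N → ℤ → R → R)
    (hPadd : ∀ j ℓ x y, P j ℓ (x + y) = P j ℓ x + P j ℓ y)
    (hPmul : ∀ j ℓ x y, P j ℓ (x * y) = x * P j ℓ y + P j ℓ x * y)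
    (hPS : ∀ j ℓ x, S (P j ℓ x) = P j (ℓ + 1) (S x))
    (p : ℤ)
    (M G : Matrix (Fin d) (Fin d) R)
    (hM : IsUnit M.det) (hG : IsUnit G.det)
    (hMsupp : ∀ (j : Fin N) (ℓ : ℤ), ℓ ∉ Set.Icc 0 p → M.map (P j ℓ) = 0)
    (hGfin : ∃ A : Finset ℤ, ∀ (j : Fin N) (ℓ : ℤ), ℓ ∉ A → G.map (P j ℓ) = 0)
    (hhat : ∀ (j : Fin N) (ℓ : ℤ), ℓ ∉ Set.Icc 0 (p - 1) →
      ((G.map ⇑S) * M * G⁻¹).map (P j ℓ) = 0) :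
    ∀ (j : Fin N) (ℓ : ℤ), ℓ ∉ Set.Icc 0 (p - 1) → G.map (P j ℓ) = 0 := by
  obtain ⟨A, hA⟩ := hGfin
  intro j
  have hstep (ℓ : ℤ) (hℓ : ℓ < 0 ∨ p < ℓ) : G.map (P j ℓ) = 0 ↔ G.map (P j (ℓ - 1)) = 0 :=
    Matrix.map_eq_zero_iff_map_pred_eq_zero S (hPadd j) (hPmul j) (hPS j)
      ((Matrix.isUnit_iff_isUnit_det M).2 hM) ((Matrix.isUnit_iff_isUnit_det G).2 hG)
      (hMsupp j ℓ (by grind)) (hhat j ℓ (by grind))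
  have hlarge : ∀ᶠ ℓ in atBot ⊔ atTop, G.map (P j ℓ) = 0 := by
    simpa [← Int.cofinite_eq] using A.eventually_cofinite_notMem.mono (hA j)
  intro ℓ hℓ
  rcases lt_or_ge ℓ 0 with hneg | hpos
  · exact Int.forall_lt_of_eventually_atBot (eventually_sup.1 hlarge).1
      (fun k hk => (hstep k (.inl hk)).2) ℓ hneg
  · exact Int.forall_ge_of_eventually_atTop (eventually_sup.1 hlarge).2
      (fun k hk => (hstep k (.inr hk)).1) ℓ (by grind)

/-- Fix positive integers `d`, `N`.  `R` is a commutative ring, `S` a ring automorphism,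
`P j ℓ` derivations with the intertwining law `S ∘ P j ℓ = P j (ℓ+1) ∘ S`, all acting
entrywise on matrices.  `Q` has ∂-support in `A` if `P j ℓ Q = 0` for `ℓ ∉ A`; finite
∂-support means such a finite `A` exists.  Claim: let `p ≥ 1`, let `M` be invertible
with ∂-support in `{0,…,p}`, and `G` invertible with finite ∂-support.  If
`M̂ = S(G)·M·G⁻¹` has ∂-support in `{0,…,p−1}`, then `G` has ∂-support in `{0,…,p−1}`. -/
theorem stmt_3 {d N : ℕ} (hd : 0 < d) (hN : 0 < N) {R : Type*} [CommRing R]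
    (S : R ≃+* R)
    (P : Fin N → ℤ → R → R)
    (hPadd : ∀ j ℓ x y, P j ℓ (x + y) = P j ℓ x + P j ℓ y)
    (hPmul : ∀ j ℓ x y, P j ℓ (x * y) = x * P j ℓ y + P j ℓ x * y)
    (hPS : ∀ j ℓ x, S (P j ℓ x) = P j (ℓ + 1) (S x))
    (p : ℤ) (hp : 1 ≤ p)
    (M G : Matrix (Fin d) (Fin d) R)
    (hM : IsUnit M.det) (hG : IsUnit G.det)
    (hMsupp : ∀ (j : Fin N) (ℓ : ℤ), ℓ ∉ Set.Icc 0 p → M.map (P j ℓ) = 0)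
    (hGfin : ∃ A : Finset ℤ, ∀ (j : Fin N) (ℓ : ℤ), ℓ ∉ A → G.map (P j ℓ) = 0)
    (hhat : ∀ (j : Fin N) (ℓ : ℤ), ℓ ∉ Set.Icc 0 (p - 1) →
      ((G.map ⇑S) * M * G⁻¹).map (P j ℓ) = 0) :
    ∀ (j : Fin N) (ℓ : ℤ), ℓ ∉ Set.Icc 0 (p - 1) → G.map (P j ℓ) = 0 :=
  stmt_3_general S P hPadd hPmul hPS p M G hM hG hMsupp hGfin hhat
end

section
/- Let M, G ∈ GL(d,R) have finite ∂-support. Then the invertible matrix S(G)·M·G⁻¹ has finite ∂-support, and for every j ∈ {1,…,N}: E_j(S(G)·M·G⁻¹) = S(G)·E_j(M)·S(G)⁻¹. -/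
/-- The operator `∇_M(Q) = S(M⁻¹·Q·M)` (with `S` applied entrywise). -/
noncomputable def nabla {R : Type*} [CommRing R] {d : ℕ} (S : R ≃+* R)
    (M : Matrix (Fin d) (Fin d) R) (Q : Matrix (Fin d) (Fin d) R) :
    Matrix (Fin d) (Fin d) R :=
  (M⁻¹ * Q * M).map ⇑S

/-- The inverse operator `∇_M⁻¹(Q) = M·S⁻¹(Q)·M⁻¹`. -/
noncomputable def nablaInv {R : Type*} [CommRing R] {d : ℕ} (S : R ≃+* R)
    (M : Matrix (Fin d) (Fin d) R) (Q : Matrix (Fin d) (Fin d) R) :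
    Matrix (Fin d) (Fin d) R :=
  M * (Q.map ⇑S.symm) * M⁻¹

/-- Integer powers `∇_M^k` of the operator `∇_M`. -/
noncomputable def nablaZPow {R : Type*} [CommRing R] {d : ℕ} (S : R ≃+* R)
    (M : Matrix (Fin d) (Fin d) R) (k : ℤ) (Q : Matrix (Fin d) (Fin d) R) :
    Matrix (Fin d) (Fin d) R :=
  if 0 ≤ k then (nabla S M)^[k.toNat] Q else (nablaInv S M)^[(-k).toNat] Q

/-- `E_j(M) = Σ_{ℓ∈ℤ} ∇_M^{−ℓ}(∂_{j,ℓ}(M)·M⁻¹)` (a finite sum, taken as `finsum`). -/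
noncomputable def Ej {R : Type*} [CommRing R] {d N : ℕ} (S : R ≃+* R)
    (P : Fin N → ℤ → R → R) (j : Fin N) (M : Matrix (Fin d) (Fin d) R) :
    Matrix (Fin d) (Fin d) R :=
  ∑ᶠ ℓ : ℤ, nablaZPow S M (-ℓ) ((M.map (P j ℓ)) * M⁻¹)

/-!
Write `U = S(G)` and `M' = U·M·G⁻¹`. Conjugation `c_U(Q) = U·Q·U⁻¹` intertwines the twisted
conjugations, `∇_{M'} = c_U ∘ ∇_M ∘ c_U⁻¹`, hence also all their integer powers. The right
logarithmic derivative transforms as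
`U⁻¹·∂_ℓ(M')·M'⁻¹·U = ∂_ℓ(M)·M⁻¹ + S(G⁻¹·∂_{ℓ-1}G) - M·(G⁻¹·∂_ℓ G)·M⁻¹`,
and the last term is `∇_M⁻¹(S(G⁻¹·∂_ℓ G))`. After applying `∇_M^{-ℓ}` the contribution of `G` is
therefore `g(ℓ) - g(ℓ+1)` with `g(ℓ) = ∇_M^{-ℓ}(S(G⁻¹·∂_{ℓ-1}G))`, which telescopes away in `E_j`.
-/

open Function

namespace Matrix

variable {n R R' : Type*} [CommRing R] [CommRing R']

theorem map_symm_map (e : R ≃+* R') (A : Matrix n n R) : (A.map e).map e.symm = A := by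
  ext; simp

theorem map_map_symm (e : R ≃+* R') (A : Matrix n n R') : (A.map e.symm).map e = A := by
  ext; simp

variable {F : Type*} [FunLike F R R'] [RingHomClass F R R'] [Fintype n] [DecidableEq n]

theorem map_nonsing_inv_s7 (f : F) {A : Matrix n n R} (hA : IsUnit A.det) :
    (A.map f)⁻¹ = A⁻¹.map f :=
  inv_eq_left_inv <| by
    rw [← Matrix.map_mul, nonsing_inv_mul A hA, Matrix.map_one _ (map_zero f) (map_one f)]

theorem isUnit_det_map_s7 (f : F) {A : Matrix n n R} (hA : IsUnit A.det) :
    IsUnit (A.map f).det := by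
  simpa [RingHom.map_det] using hA.map (f : R →+* R')

end Matrix

namespace Derivation

variable {K R : Type*} [CommRing K] [CommRing R] [Algebra K R] (D : Derivation K R R)

theorem matrix_map_mul {l m n : Type*} [Fintype m] (A : Matrix l m R) (B : Matrix m n R) :
    (A * B).map D = A * B.map D + A.map D * B := by
  ext i k
  simp [Matrix.mul_apply, Finset.sum_add_distrib, mul_comm]

variable {n : Type*} [DecidableEq n]

theorem matrix_map_one : (1 : Matrix n n R).map D = 0 := by
  ext i k
  by_cases h : i = k <;> simp [h]

variable [Fintype n]

theorem matrix_map_nonsing_inv {A : Matrix n n R} (hA : IsUnit A.det) :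
    A⁻¹.map D = -(A⁻¹ * A.map D * A⁻¹) := by
  have h : A⁻¹ * A.map D + A⁻¹.map D * A = 0 := by
    rw [← matrix_map_mul, Matrix.nonsing_inv_mul _ hA, matrix_map_one]
  calc A⁻¹.map D = A⁻¹.map D * A * A⁻¹ := by rw [mul_assoc, Matrix.mul_nonsing_inv _ hA, mul_one]
    _ = -(A⁻¹ * A.map D * A⁻¹) := by rw [eq_neg_of_add_eq_zero_right h, neg_mul]

noncomputable def rightLogDeriv (A : Matrix n n R) : Matrix n n R := A.map D * A⁻¹

noncomputable def leftLogDeriv (A : Matrix n n R) : Matrix n n R := A⁻¹ * A.map D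

theorem rightLogDeriv_mul (A : Matrix n n R) {B : Matrix n n R} (hB : IsUnit B.det) :
    D.rightLogDeriv (A * B) = D.rightLogDeriv A + A * D.rightLogDeriv B * A⁻¹ := by
  simp only [rightLogDeriv, matrix_map_mul, Matrix.mul_inv_rev, add_mul, Matrix.mul_assoc]
  rw [← Matrix.mul_assoc B, Matrix.mul_nonsing_inv _ hB, Matrix.one_mul, add_comm]

theorem rightLogDeriv_nonsing_inv {A : Matrix n n R} (hA : IsUnit A.det) :
    D.rightLogDeriv A⁻¹ = -D.leftLogDeriv A := by
  rw [rightLogDeriv, leftLogDeriv, matrix_map_nonsing_inv D hA, Matrix.nonsing_inv_nonsing_inv _ hA,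
    neg_mul, Matrix.mul_assoc, Matrix.nonsing_inv_mul _ hA, Matrix.mul_one]

theorem conj_rightLogDeriv_gauge {U M G : Matrix n n R} (hU : IsUnit U.det) (hM : IsUnit M.det)
    (hG : IsUnit G.det) :
    U⁻¹ * D.rightLogDeriv (U * M * G⁻¹) * U
      = D.rightLogDeriv M + D.leftLogDeriv U - M * D.leftLogDeriv G * M⁻¹ := by
  have hG' : IsUnit G⁻¹.det := Matrix.isUnit_nonsing_inv_det G hG
  have hMG : IsUnit (M * G⁻¹).det := by rw [Matrix.det_mul]; exact hM.mul hG'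
  rw [Matrix.mul_assoc U, rightLogDeriv_mul D U hMG, rightLogDeriv_mul D M hG',
    rightLogDeriv_nonsing_inv D hG, rightLogDeriv.eq_1 D U]
  simp only [leftLogDeriv, Matrix.mul_add, Matrix.add_mul, Matrix.mul_assoc,
    Matrix.nonsing_inv_mul_cancel_left _ _ hU, Matrix.nonsing_inv_mul _ hU, Matrix.mul_one,
    Matrix.mul_neg, Matrix.neg_mul]
  abel

section Twisted

variable {F : Type*} [FunLike F R R] [RingHomClass F R R] (S : F) {D' : Derivation K R R}

omit [Fintype n] [DecidableEq n] [RingHomClass F R R] in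
theorem matrix_map_map_of_comp (hDS : ∀ x, S (D x) = D' (S x)) (A : Matrix n n R) :
    (A.map S).map D' = (A.map D).map S := by
  ext i k; simp [hDS]

theorem leftLogDeriv_map (hDS : ∀ x, S (D x) = D' (S x)) {G : Matrix n n R} (hG : IsUnit G.det) :
    D'.leftLogDeriv (G.map S) = (D.leftLogDeriv G).map S := by
  rw [leftLogDeriv, leftLogDeriv, Matrix.map_nonsing_inv_s7 S hG, matrix_map_map_of_comp D S hDS,
    Matrix.map_mul]

theorem map_gauge_eq_zero (hDS : ∀ x, S (D x) = D' (S x)) {M G : Matrix n n R} (hG : IsUnit G.det)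
    (hD'M : M.map D' = 0) (hD'G : G.map D' = 0) (hDG : G.map D = 0) :
    (G.map S * M * G⁻¹).map D' = 0 := by
  simp [matrix_map_mul, matrix_map_nonsing_inv D' hG, matrix_map_map_of_comp D S hDS, hD'M, hD'G,
    hDG]

end Twisted

end Derivation

def conjEndUnit {A : Type*} [Ring A] (u : Aˣ) : (AddMonoid.End A)ˣ where
  val := AddMonoidHom.mk' (fun x => u * x * u.inv) fun x y => by rw [mul_add, add_mul]
  inv := AddMonoidHom.mk' (fun x => u.inv * x * u) fun x y => by rw [mul_add, add_mul]
  val_inv := AddMonoidHom.ext fun x => show u * (u.inv * x * u) * u.inv = x by simp [mul_assoc]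
  inv_val := AddMonoidHom.ext fun x => show u.inv * (u * x * u.inv) * u = x by simp [mul_assoc]

section Nabla

variable {R : Type*} [CommRing R] {d : ℕ} (S : R ≃+* R) {M : Matrix (Fin d) (Fin d) R}

theorem nabla_nablaInv (hM : IsUnit M.det) (Q : Matrix (Fin d) (Fin d) R) :
    nabla S M (nablaInv S M Q) = Q := by
  rw [nabla, nablaInv, Matrix.mul_assoc M, Matrix.nonsing_inv_mul_cancel_left _ _ hM,
    Matrix.nonsing_inv_mul_cancel_right _ _ hM, Matrix.map_map_symm]

theorem nablaInv_nabla (hM : IsUnit M.det) (Q : Matrix (Fin d) (Fin d) R) :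
    nablaInv S M (nabla S M Q) = Q := by
  rw [nabla, nablaInv, Matrix.map_symm_map, ← Matrix.mul_assoc M,
    Matrix.mul_nonsing_inv_cancel_right _ _ hM, Matrix.mul_nonsing_inv_cancel_left _ _ hM]

theorem nablaInv_map (M X : Matrix (Fin d) (Fin d) R) : nablaInv S M (X.map S) = M * X * M⁻¹ := by
  rw [nablaInv, Matrix.map_symm_map]

noncomputable def nablaUnit (hM : IsUnit M.det) : (AddMonoid.End (Matrix (Fin d) (Fin d) R))ˣ where
  val := AddMonoidHom.mk' (nabla S M) fun P Q => by
    simp only [nabla, Matrix.mul_add, Matrix.add_mul, Matrix.map_add _ (map_add S)]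
  inv := AddMonoidHom.mk' (nablaInv S M) fun P Q => by
    simp only [nablaInv, Matrix.map_add _ (map_add S.symm), Matrix.mul_add, Matrix.add_mul]
  val_inv := AddMonoidHom.ext (nabla_nablaInv S hM)
  inv_val := AddMonoidHom.ext (nablaInv_nabla S hM)

theorem nablaZPow_eq_zpow (hM : IsUnit M.det) (k : ℤ) :
    nablaZPow S M k = ⇑(↑(nablaUnit S hM ^ k) : AddMonoid.End (Matrix (Fin d) (Fin d) R)) := by
  funext Q
  unfold nablaZPow
  split_ifs with hk
  · lift k to ℕ using hk
    rw [zpow_natCast, Units.val_pow_eq_pow_val, AddMonoid.End.coe_pow]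
    rfl
  · obtain ⟨n, rfl⟩ := Int.exists_eq_neg_ofNat (by omega : k ≤ 0)
    rw [zpow_neg, zpow_natCast, ← inv_pow, Units.val_pow_eq_pow_val, AddMonoid.End.coe_pow,
      neg_neg, Int.toNat_natCast]
    rfl

theorem nablaZPow_sub_one (hM : IsUnit M.det) (k : ℤ) (Q : Matrix (Fin d) (Fin d) R) :
    nablaZPow S M (k - 1) Q = nablaZPow S M k (nablaInv S M Q) := by
  rw [nablaZPow_eq_zpow S hM, nablaZPow_eq_zpow S hM, zpow_sub_one, Units.val_mul]
  rfl

variable {G : Matrix (Fin d) (Fin d) R}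

theorem isUnit_det_gauge (hM : IsUnit M.det) (hG : IsUnit G.det) :
    IsUnit (G.map S * M * G⁻¹).det := by
  rw [Matrix.det_mul, Matrix.det_mul]
  exact ((Matrix.isUnit_det_map_s7 S hG).mul hM).mul (Matrix.isUnit_nonsing_inv_det G hG)

theorem nablaUnit_gauge (hM : IsUnit M.det) (hG : IsUnit G.det) :
    nablaUnit S (isUnit_det_gauge S hM hG)
      = conjEndUnit (Matrix.nonsingInvUnit _ (Matrix.isUnit_det_map_s7 S hG))
        * nablaUnit S hM
        * (conjEndUnit (Matrix.nonsingInvUnit _ (Matrix.isUnit_det_map_s7 S hG)))⁻¹ := by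
  refine Units.ext (AddMonoidHom.ext fun Q => ?_)
  change nabla S (G.map S * M * G⁻¹) Q
    = G.map S * nabla S M ((G.map S)⁻¹ * Q * G.map S) * (G.map S)⁻¹
  rw [nabla, nabla, Matrix.mul_inv_rev, Matrix.mul_inv_rev, Matrix.nonsing_inv_nonsing_inv _ hG,
    Matrix.map_nonsing_inv_s7 S hG, ← Matrix.map_mul, ← Matrix.map_mul]
  simp only [Matrix.mul_assoc]

theorem nablaZPow_gauge (hM : IsUnit M.det) (hG : IsUnit G.det) (k : ℤ)
    (Q : Matrix (Fin d) (Fin d) R) :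
    nablaZPow S (G.map S * M * G⁻¹) k Q
      = G.map S * nablaZPow S M k ((G.map S)⁻¹ * Q * G.map S) * (G.map S)⁻¹ := by
  rw [nablaZPow_eq_zpow S (isUnit_det_gauge S hM hG), nablaUnit_gauge S hM hG, conj_zpow,
    nablaZPow_eq_zpow S hM]
  rfl

end Nabla

theorem finsum_add_sub_add_one {A : Type*} [AddCommGroup A] {f g : ℤ → A}
    (hf : HasFiniteSupport f) (hg : HasFiniteSupport g) :
    ∑ᶠ ℓ, (f ℓ + g ℓ - g (ℓ + 1)) = ∑ᶠ ℓ, f ℓ := by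
  have hg' : HasFiniteSupport fun ℓ => g (ℓ + 1) := hg.fun_comp_of_injective (add_left_injective 1)
  have hfg : HasFiniteSupport fun ℓ => f ℓ + g ℓ := hf.add hg
  have hshift : ∑ᶠ ℓ, g (ℓ + 1) = ∑ᶠ ℓ, g ℓ := finsum_comp_equiv (Equiv.addRight 1)
  rw [finsum_sub_distrib hfg hg', finsum_add_distrib hf hg, hshift, add_sub_cancel_right]

section Gauge

variable {R : Type*} [CommRing R] {d : ℕ} (S : R ≃+* R) {M G : Matrix (Fin d) (Fin d) R}

theorem nablaZPow_rightLogDeriv_gauge {K : Type*} [CommRing K] [Algebra K R]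
    {D D' : Derivation K R R} (hDS : ∀ x, S (D x) = D' (S x)) (hM : IsUnit M.det)
    (hG : IsUnit G.det) (k : ℤ) :
    nablaZPow S (G.map S * M * G⁻¹) k (D'.rightLogDeriv (G.map S * M * G⁻¹))
      = G.map S * (nablaZPow S M k (D'.rightLogDeriv M)
          + nablaZPow S M k ((D.leftLogDeriv G).map S)
          - nablaZPow S M (k - 1) ((D'.leftLogDeriv G).map S)) * (G.map S)⁻¹ := by
  rw [nablaZPow_gauge S hM hG, D'.conj_rightLogDeriv_gauge (Matrix.isUnit_det_map_s7 S hG) hM hG,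
    D.leftLogDeriv_map S hDS hG, nablaZPow_sub_one S hM, nablaInv_map, nablaZPow_eq_zpow S hM,
    map_sub, map_add]

theorem Ej_gauge {N : ℕ} (P : Fin N → ℤ → R → R) (j : Fin N) (D : ℤ → Derivation ℤ R R)
    (hD : ∀ ℓ, ⇑(D ℓ) = P j ℓ) (hDS : ∀ ℓ x, S (D (ℓ - 1) x) = D ℓ (S x))
    (hM : IsUnit M.det) (hG : IsUnit G.det)
    (hMfin : ∃ A : Finset ℤ, ∀ ℓ ∉ A, M.map (D ℓ) = 0)
    (hGfin : ∃ A : Finset ℤ, ∀ ℓ ∉ A, G.map (D ℓ) = 0) :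
    Ej S P j (G.map S * M * G⁻¹) = G.map S * Ej S P j M * (G.map S)⁻¹ := by
  obtain ⟨AM, hAM⟩ := hMfin
  obtain ⟨AG, hAG⟩ := hGfin
  have hEj : ∀ X : Matrix (Fin d) (Fin d) R,
      Ej S P j X = ∑ᶠ ℓ, nablaZPow S X (-ℓ) ((D ℓ).rightLogDeriv X) := fun X => by
    simp only [Ej, Derivation.rightLogDeriv, hD]
  have hzero : ∀ k, nablaZPow S M k 0 = 0 := fun k => by rw [nablaZPow_eq_zpow S hM, map_zero]
  set a : ℤ → Matrix (Fin d) (Fin d) R := fun ℓ => nablaZPow S M (-ℓ) ((D ℓ).rightLogDeriv M)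
  set g : ℤ → Matrix (Fin d) (Fin d) R :=
    fun ℓ => nablaZPow S M (-ℓ) (((D (ℓ - 1)).leftLogDeriv G).map S)
  have ha : HasFiniteSupport a := AM.finite_toSet.subset fun ℓ hℓ => by
    by_contra h
    exact hℓ (by simp [a, Derivation.rightLogDeriv, hAM ℓ h, hzero])
  have hg : HasFiniteSupport g :=
    (AG.finite_toSet.preimage (sub_left_injective (b := (1 : ℤ))).injOn).subset fun ℓ hℓ => by
      by_contra h
      exact hℓ (by simp only [g, Derivation.leftLogDeriv, hAG (ℓ - 1) h, Matrix.mul_zero,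
        Matrix.map_zero _ (map_zero S), hzero])
  set φ : AddMonoid.End (Matrix (Fin d) (Fin d) R) :=
    ↑(conjEndUnit (Matrix.nonsingInvUnit _ (Matrix.isUnit_det_map_s7 S hG)))
  have hterm : ∀ ℓ,
      nablaZPow S (G.map S * M * G⁻¹) (-ℓ) ((D ℓ).rightLogDeriv (G.map S * M * G⁻¹))
        = φ (a ℓ + g ℓ - g (ℓ + 1)) := fun ℓ => by
    rw [nablaZPow_rightLogDeriv_gauge S (hDS ℓ) hM hG]
    simp only [a, g, add_sub_cancel_right, neg_add']
    rfl
  have hsum : HasFiniteSupport fun ℓ => a ℓ + g ℓ - g (ℓ + 1) :=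
    (ha.add hg).sub (hg.fun_comp_of_injective (add_left_injective 1))
  calc Ej S P j (G.map S * M * G⁻¹) = ∑ᶠ ℓ, φ (a ℓ + g ℓ - g (ℓ + 1)) :=
        (hEj _).trans (finsum_congr hterm)
    _ = φ (∑ᶠ ℓ, (a ℓ + g ℓ - g (ℓ + 1))) := (AddMonoidHom.map_finsum φ hsum).symm
    _ = G.map S * Ej S P j M * (G.map S)⁻¹ := by rw [finsum_add_sub_add_one ha hg, hEj]; rfl

end Gauge

theorem stmt_7_general {d N : ℕ} {R : Type*} [CommRing R]
    (S : R ≃+* R)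
    (P : Fin N → ℤ → R → R)
    (hPadd : ∀ j ℓ x y, P j ℓ (x + y) = P j ℓ x + P j ℓ y)
    (hPmul : ∀ j ℓ x y, P j ℓ (x * y) = x * P j ℓ y + P j ℓ x * y)
    (hPS : ∀ j ℓ x, S (P j ℓ x) = P j (ℓ + 1) (S x))
    (M G : Matrix (Fin d) (Fin d) R)
    (hM : IsUnit M.det) (hG : IsUnit G.det)
    (hMfin : ∃ A : Finset ℤ, ∀ (j : Fin N) (ℓ : ℤ), ℓ ∉ A → M.map (P j ℓ) = 0)
    (hGfin : ∃ A : Finset ℤ, ∀ (j : Fin N) (ℓ : ℤ), ℓ ∉ A → G.map (P j ℓ) = 0) :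
    IsUnit ((G.map ⇑S) * M * G⁻¹).det ∧
    (∃ A : Finset ℤ, ∀ (j : Fin N) (ℓ : ℤ), ℓ ∉ A → ((G.map ⇑S) * M * G⁻¹).map (P j ℓ) = 0) ∧
    ∀ j : Fin N,
      Ej S P j ((G.map ⇑S) * M * G⁻¹) = (G.map ⇑S) * Ej S P j M * (G.map ⇑S)⁻¹ := by
  obtain ⟨AM, hAM⟩ := hMfin
  obtain ⟨AG, hAG⟩ := hGfin
  let D : Fin N → ℤ → Derivation ℤ R R := fun j ℓ =>
    Derivation.mk' (AddMonoidHom.mk' (P j ℓ) (hPadd j ℓ)).toIntLinearMap fun x y => by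
      simp [hPmul, mul_comm]
  have hDS : ∀ j ℓ x, S (D j (ℓ - 1) x) = D j ℓ (S x) := fun j ℓ x =>
    (hPS j (ℓ - 1) x).trans (congrArg (P j · (S x)) (sub_add_cancel ℓ 1))
  refine ⟨isUnit_det_gauge S hM hG, ⟨AM ∪ AG ∪ AG.image (· + 1), fun j ℓ hℓ => ?_⟩,
    fun j => Ej_gauge S P j (D j) (fun _ => rfl) (hDS j) hM hG ⟨AM, hAM j⟩ ⟨AG, hAG j⟩⟩
  simp only [Finset.mem_union, Finset.mem_image, not_or, not_exists, not_and] at hℓ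
  exact (D j (ℓ - 1)).map_gauge_eq_zero S (hDS j ℓ) hG (hAM j ℓ hℓ.1.1) (hAG j ℓ hℓ.1.2)
    (hAG j (ℓ - 1) fun h => hℓ.2 _ h (by ring))

/-- Fix positive integers `d`, `N`.  `R` is a commutative ring, `S` a ring automorphism,
`P j ℓ` derivations satisfying `S ∘ P j ℓ = P j (ℓ+1) ∘ S`, all acting entrywise on `d×d`
matrices.  A matrix has ∂-support in `A ⊆ ℤ` if `P j ℓ` kills it for all `ℓ ∉ A`; finite
∂-support means such a finite `A` exists.  For invertible `M` with finite ∂-support,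
`E_j(M) = Σ_ℓ ∇_M^{−ℓ}(∂_{j,ℓ}(M)·M⁻¹)`.  Claim: if `M, G` are invertible with finite
∂-support, then `S(G)·M·G⁻¹` is invertible with finite ∂-support and
`E_j(S(G)·M·G⁻¹) = S(G)·E_j(M)·S(G)⁻¹` for every `j`. -/
theorem stmt_7 {d N : ℕ} (hd : 0 < d) (hN : 0 < N) {R : Type*} [CommRing R]
    (S : R ≃+* R)
    (P : Fin N → ℤ → R → R)
    (hPadd : ∀ j ℓ x y, P j ℓ (x + y) = P j ℓ x + P j ℓ y)
    (hPmul : ∀ j ℓ x y, P j ℓ (x * y) = x * P j ℓ y + P j ℓ x * y)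
    (hPS : ∀ j ℓ x, S (P j ℓ x) = P j (ℓ + 1) (S x))
    (M G : Matrix (Fin d) (Fin d) R)
    (hM : IsUnit M.det) (hG : IsUnit G.det)
    (hMfin : ∃ A : Finset ℤ, ∀ (j : Fin N) (ℓ : ℤ), ℓ ∉ A → M.map (P j ℓ) = 0)
    (hGfin : ∃ A : Finset ℤ, ∀ (j : Fin N) (ℓ : ℤ), ℓ ∉ A → G.map (P j ℓ) = 0) :
    IsUnit ((G.map ⇑S) * M * G⁻¹).det ∧
    (∃ A : Finset ℤ, ∀ (j : Fin N) (ℓ : ℤ), ℓ ∉ A → ((G.map ⇑S) * M * G⁻¹).map (P j ℓ) = 0) ∧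
    ∀ j : Fin N,
      Ej S P j ((G.map ⇑S) * M * G⁻¹) = (G.map ⇑S) * Ej S P j M * (G.map ⇑S)⁻¹ :=
  stmt_7_general S P hPadd hPmul hPS M G hM hG hMfin hGfin
end

section
/- Consider the 2-component equation of Konstantinou-Rizos–Mikhailov–Xenitidis: 𝔽¹ = 2(u²₁·(u¹₀)² + α₀·u¹₀ − u¹₁), 𝔽² = 2(u²₋₁ − u¹₋₁·(u²₀)² − α₋₁·u²₀). Then the matrices M̃ = [[λ + α₀ + u¹₀·u²₁, u¹₀],[u²₁, 1]] and Ũ = [[−λ, −2u¹₀],[−2u²₀, λ]] form an MLR for this equation: D_t(M̃) = S(Ũ)·M̃ − M̃·Ũ. -/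
open MvPolynomial

/-- Variables: `none` is `λ`; `some (none, ℓ)` is `α_ℓ`; `some (some j, ℓ)` is `u^j_ℓ`. -/
abbrev VarA := Option (Option (Fin 2) × ℤ)

/-- Polynomial ring over `K` in `λ`, `α_ℓ`, `u¹_ℓ`, `u²_ℓ`. -/
abbrev PolyA (K : Type) [Field K] := MvPolynomial VarA K

/-- Field of rational functions over `K` in `λ`, `α_ℓ`, `u¹_ℓ`, `u²_ℓ`. -/
abbrev FA (K : Type) [Field K] := FractionRing (PolyA K)

/-- The spectral parameter `λ`. -/
noncomputable def lam (K : Type) [Field K] : FA K :=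
  algebraMap (PolyA K) (FA K) (X none)

/-- The variable `α_ℓ` (playing the role of `α(n+ℓ)`). -/
noncomputable def al (K : Type) [Field K] (ℓ : ℤ) : FA K :=
  algebraMap (PolyA K) (FA K) (X (some (none, ℓ)))

/-- The variable `u¹_ℓ`. -/
noncomputable def U1 (K : Type) [Field K] (ℓ : ℤ) : FA K :=
  algebraMap (PolyA K) (FA K) (X (some (some 0, ℓ)))

/-- The variable `u²_ℓ`. -/
noncomputable def U2 (K : Type) [Field K] (ℓ : ℤ) : FA K :=
  algebraMap (PolyA K) (FA K) (X (some (some 1, ℓ)))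

/-- Right-hand side `𝔽¹ = 2(u²₁·(u¹₀)² + α₀·u¹₀ − u¹₁)` of the KMX equation. -/
noncomputable def Feq1 (K : Type) [Field K] : FA K :=
  2 * (U2 K 1 * (U1 K 0) ^ 2 + al K 0 * U1 K 0 - U1 K 1)

/-- Right-hand side `𝔽² = 2(u²₋₁ − u¹₋₁·(u²₀)² − α₋₁·u²₀)` of the KMX equation. -/
noncomputable def Feq2 (K : Type) [Field K] : FA K :=
  2 * (U2 K (-1) - U1 K (-1) * (U2 K 0) ^ 2 - al K (-1) * U2 K 0)

set_option maxHeartbeats 1000000 in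
/-- `F` is the field of rational functions over a char-0 field `K` in `λ, α_ℓ, u¹_ℓ, u²_ℓ`;
`S` is the field automorphism over `K` fixing `λ` with `S(α_ℓ) = α_{ℓ+1}`,
`S(u^j_ℓ) = u^j_{ℓ+1}`, and `D_t` is the total derivative of the
Konstantinou-Rizos–Mikhailov–Xenitidis equation `∂_t u^j = 𝔽^j` (the unique derivation
with `D_t(λ) = 0`, `D_t(α_ℓ) = 0`, `D_t(u^j_ℓ) = S^ℓ(𝔽^j)`); both are quantified by
these characterizing properties.  Claim: the matrices
`M̃ = [[λ + α₀ + u¹₀u²₁, u¹₀],[u²₁, 1]]`, `Ũ = [[−λ, −2u¹₀],[−2u²₀, λ]]` form an MLR: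
`det M̃ ≠ 0` and `D_t(M̃) = S(Ũ)·M̃ − M̃·Ũ`. -/
theorem stmt_11 (K : Type) [Field K] [CharZero K]
    (S : FA K ≃+* FA K)
    (hSK : ∀ c : K, S (algebraMap K (FA K) c) = algebraMap K (FA K) c)
    (hSlam : S (lam K) = lam K)
    (hSal : ∀ ℓ : ℤ, S (al K ℓ) = al K (ℓ + 1))
    (hSu1 : ∀ ℓ : ℤ, S (U1 K ℓ) = U1 K (ℓ + 1))
    (hSu2 : ∀ ℓ : ℤ, S (U2 K ℓ) = U2 K (ℓ + 1))
    (Dt : FA K → FA K)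
    (hDadd : ∀ x y, Dt (x + y) = Dt x + Dt y)
    (hDmul : ∀ x y, Dt (x * y) = x * Dt y + Dt x * y)
    (hDK : ∀ c : K, Dt (algebraMap K (FA K) c) = 0)
    (hDlam : Dt (lam K) = 0)
    (hDal : ∀ ℓ : ℤ, Dt (al K ℓ) = 0)
    (hDu1 : ∀ ℓ : ℤ, Dt (U1 K ℓ) = (S ^ ℓ) (Feq1 K))
    (hDu2 : ∀ ℓ : ℤ, Dt (U2 K ℓ) = (S ^ ℓ) (Feq2 K)) :
    (!![lam K + al K 0 + U1 K 0 * U2 K 1, U1 K 0; U2 K 1, 1] :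
        Matrix (Fin 2) (Fin 2) (FA K)).det ≠ 0 ∧
    (!![lam K + al K 0 + U1 K 0 * U2 K 1, U1 K 0; U2 K 1, 1] :
        Matrix (Fin 2) (Fin 2) (FA K)).map Dt =
      (!![-(lam K), -(2 * U1 K 0); -(2 * U2 K 0), lam K] :
          Matrix (Fin 2) (Fin 2) (FA K)).map ⇑S *
        !![lam K + al K 0 + U1 K 0 * U2 K 1, U1 K 0; U2 K 1, 1] -
      !![lam K + al K 0 + U1 K 0 * U2 K 1, U1 K 0; U2 K 1, 1] *
        !![-(lam K), -(2 * U1 K 0); -(2 * U2 K 0), lam K] := by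
  have hD1 : Dt 1 = 0 := by
    have := hDK 1; simpa using this
  have hDu10 : Dt (U1 K 0) = Feq1 K := by
    rw [hDu1 0, zpow_zero]; rfl
  have hDu21 : Dt (U2 K 1) = S (Feq2 K) := by
    rw [hDu2 1, zpow_one]
  have hS2 : S (2 : FA K) = 2 := map_ofNat S 2
  have hSF2 : S (Feq2 K) =
      2 * (U2 K 0 - U1 K 0 * (U2 K 1) ^ 2 - al K 0 * U2 K 1) := by
    simp only [Feq2, map_mul, map_add, map_sub, map_pow, hS2, hSal, hSu1, hSu2]
    norm_num
  constructor
  · have hdet : (!![lam K + al K 0 + U1 K 0 * U2 K 1, U1 K 0; U2 K 1, 1] :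
        Matrix (Fin 2) (Fin 2) (FA K)).det = lam K + al K 0 := by
      simp [Matrix.det_fin_two_of]
    rw [hdet, lam, al, ← map_add]
    intro h
    have hinj := IsFractionRing.injective (PolyA K) (FA K)
    have h0 : (X none + X (some (none, 0)) : PolyA K) = 0 := by
      apply hinj; simpa using h
    have := congrArg (MvPolynomial.coeff (Finsupp.single none 1)) h0
    simp [MvPolynomial.coeff_X', Finsupp.single_eq_single_iff] at this
  · ext i j
    fin_cases i <;> fin_cases j <;>
      simp only [Matrix.of_apply, Matrix.map_apply, Matrix.mul_apply, Fin.sum_univ_two,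
        Matrix.sub_apply, Matrix.cons_val', Matrix.cons_val_zero,
        Matrix.cons_val_one, Matrix.head_cons, Matrix.head_fin_const,
        Matrix.empty_val', Matrix.cons_val_fin_one, Fin.mk_zero, Fin.mk_one,
        Fin.isValue, hDadd, hDmul, hD1, hDu10, hDu21, hDlam, hDal,
        map_neg, map_mul, hS2, hSlam, hSu1, hSu2, zero_add, hSF2, Feq1] <;>
      ring
end
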